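/- For every k ∈ ℕ and reals ε, δ > 0, there exists n ∈ ℕ such that for every finite set I with |I| > n there is a partition 2^I = a⁰ ∪ a¹ satisfying: for every distribution m on 2^I (i.e., m : 2^I → ℝ with 0 ≤ m(x) ≤ 2^{-|I|} for all x) with total mass m̄ = Σ_x m(x) ≥ ε, there exists T ⊆ 2^I with |T|/2^{|I|} > 1 − δ such that for every s ∈ T, | Σ{m(t) : t ∈ a⁰ + s} − m̄/2 | < δ. -/

import Mathlib

/-!
Take `a⁰ = {x | Q x = 0}` for the quadratic form `Q x = ∑_{i<j} x i * x j` over `𝔽₂` and let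
`χ = (-1)^Q`. The mass of `a⁰ + s` is `(m̄ + E s) / 2` with `E s = ∑_u χ u * m (u + s)`, and
`∑_s (E s)²` is the correlation of the autocorrelations of `χ` and of `m`. The autocorrelation
of `χ` at `d` is `χ d` times a character sum of `s ↦ polar Q s d`, so it vanishes unless `d`
lies in the radical of the polar form, which is contained in `{0, 1}`. Since `m ≤ 2^{-|I|}`,
this gives `∑_s (E s)² ≤ 2 m̄ ≤ 2`, and Chebyshev's inequality bounds the number of bad shifts
by `2 / (4δ²) < δ 2^{|I|}` once `|I|` is large.
-/

open Finset

section Autocorrelation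

variable {G : Type*} [AddCommGroup G] [Fintype G]

noncomputable def autocorr (f : G → ℝ) (d : G) : ℝ := ∑ s, f s * f (s + d)

lemma sum_sq_sum_mul_add_eq_sum_autocorr_mul (f m : G → ℝ) :
    ∑ s, (∑ u, f u * m (u + s)) ^ 2 = ∑ d, autocorr f d * autocorr m d := by
  calc ∑ s, (∑ u, f u * m (u + s)) ^ 2
      = ∑ s, ∑ u, ∑ d, f u * f (u + d) * (m (u + s) * m (u + s + d)) := by
        refine sum_congr rfl fun s _ => ?_
        rw [sq, sum_mul_sum]
        refine sum_congr rfl fun u _ => ?_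
        rw [← Equiv.sum_comp (Equiv.addLeft u)]
        simp only [Equiv.coe_addLeft, add_right_comm u _ s]
        exact sum_congr rfl fun _ _ => by ring
    _ = ∑ d, ∑ u, f u * f (u + d) * ∑ s, m (u + s) * m (u + s + d) := by
        simp only [mul_sum]
        rw [sum_comm]
        exact (sum_congr rfl fun _ _ => sum_comm).trans sum_comm
    _ = ∑ d, autocorr f d * autocorr m d := by
        refine sum_congr rfl fun d _ => ?_
        rw [autocorr, sum_mul]
        refine sum_congr rfl fun u _ => ?_
        rw [autocorr, ← Equiv.sum_comp (Equiv.addLeft u) fun s => m s * m (s + d)]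
        simp only [Equiv.coe_addLeft, add_assoc]

lemma abs_autocorr_le_card {f : G → ℝ} (hf : ∀ x, |f x| ≤ 1) (d : G) :
    |autocorr f d| ≤ Fintype.card G := by
  calc |autocorr f d| ≤ ∑ s, |f s * f (s + d)| := abs_sum_le_sum_abs _ _
    _ ≤ ∑ _s : G, (1 : ℝ) := by
        gcongr with s
        rw [abs_mul]
        exact mul_le_one₀ (hf s) (abs_nonneg _) (hf (s + d))
    _ = Fintype.card G := by simp

lemma abs_autocorr_le_mul_sum {m : G → ℝ} {c : ℝ} (hm0 : ∀ x, 0 ≤ m x)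
    (hmc : ∀ x, m x ≤ c) (d : G) : |autocorr m d| ≤ c * ∑ x, m x := by
  rw [autocorr, abs_of_nonneg (sum_nonneg fun s _ => mul_nonneg (hm0 s) (hm0 (s + d))),
    mul_sum]
  exact sum_le_sum fun s _ => by
    rw [mul_comm c]; exact mul_le_mul_of_nonneg_left (hmc _) (hm0 s)

lemma sum_sq_sum_mul_add_le {f m : G → ℝ} (hf : ∀ x, |f x| ≤ 1) (hm0 : ∀ x, 0 ≤ m x)
    (hm1 : ∀ x, m x ≤ 1 / Fintype.card G) :
    ∑ s, (∑ u, f u * m (u + s)) ^ 2 ≤ #{d | autocorr f d ≠ 0} * ∑ x, m x := by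
  have hG : (0 : ℝ) < Fintype.card G := by exact_mod_cast Fintype.card_pos
  rw [sum_sq_sum_mul_add_eq_sum_autocorr_mul,
    ← sum_filter_of_ne fun d _ h => left_ne_zero_of_mul h, ← nsmul_eq_mul]
  refine sum_le_card_nsmul _ _ _ fun d _ => (le_abs_self _).trans ?_
  calc |autocorr f d * autocorr m d|
      ≤ Fintype.card G * (1 / Fintype.card G * ∑ x, m x) := by
        rw [abs_mul]
        exact mul_le_mul (abs_autocorr_le_card hf d) (abs_autocorr_le_mul_sum hm0 hm1 d)
          (abs_nonneg _) hG.le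
    _ = ∑ x, m x := by field_simp

end Autocorrelation

lemma card_le_abs_mul_sq_le_sum_sq {α : Type*} [Fintype α] (E : α → ℝ) {c : ℝ} (hc : 0 ≤ c) :
    #{s | c ≤ |E s|} * c ^ 2 ≤ ∑ s, E s ^ 2 := by
  calc (#{s | c ≤ |E s|} : ℝ) * c ^ 2 = ∑ s with c ≤ |E s|, c ^ 2 := by
        rw [sum_const, nsmul_eq_mul]
    _ ≤ ∑ s with c ≤ |E s|, E s ^ 2 := sum_le_sum fun s hs => by
        rw [← sq_abs (E s)]
        exact pow_le_pow_left₀ hc (mem_filter.1 hs).2 2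
    _ ≤ ∑ s, E s ^ 2 := sum_le_sum_of_subset_of_nonneg (subset_univ _) fun _ _ _ => sq_nonneg _

lemma zmod_two_eq_zero_or_eq_one (z : ZMod 2) : z = 0 ∨ z = 1 := by decide +revert

noncomputable def signChar : AddChar (ZMod 2) ℝ :=
  AddChar.zmodChar 2 (by norm_num : (-1 : ℝ) ^ 2 = 1)

lemma signChar_apply (z : ZMod 2) : signChar z = if z = 0 then 1 else -1 := by
  rw [signChar, AddChar.zmodChar_apply]
  obtain rfl | rfl := zmod_two_eq_zero_or_eq_one z
  · simp
  · simp [ZMod.val_one]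

lemma abs_signChar (z : ZMod 2) : |signChar z| = 1 := by
  rw [signChar_apply]; split_ifs <;> simp

section BalancedShifts

variable {G : Type*} [AddCommGroup G] [Fintype G] [DecidableEq G]

lemma sum_image_add_right_eq (q : G → ZMod 2) (m : G → ℝ) (s : G) :
    ∑ t ∈ ({u | q u = 0} : Finset G).image (· + s), m t =
      (∑ x, m x + ∑ u, signChar (q u) * m (u + s)) / 2 := by
  rw [sum_image fun _ _ _ _ h => add_right_cancel h, sum_filter,
    ← Equiv.sum_comp (Equiv.addRight s) m, ← sum_add_distrib, sum_div]
  refine sum_congr rfl fun u _ => ?_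
  rw [signChar_apply]
  split_ifs <;> simp

theorem exists_large_set_of_balanced_shifts (q : G → ZMod 2) {δ : ℝ} (hδ : 0 < δ)
    (hq : (#{d | autocorr (fun x => signChar (q x)) d ≠ 0} : ℝ) < 4 * δ ^ 3 * Fintype.card G)
    {m : G → ℝ} (hm0 : ∀ x, 0 ≤ m x) (hm1 : ∀ x, m x ≤ 1 / Fintype.card G) :
    ∃ T : Finset G, (#T : ℝ) / Fintype.card G > 1 - δ ∧ ∀ s ∈ T,
      |∑ t ∈ ({u | q u = 0} : Finset G).image (· + s), m t - (∑ x, m x) / 2| < δ := by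
  set E : G → ℝ := fun s => ∑ u, signChar (q u) * m (u + s)
  have hshift : ∀ s, ∑ t ∈ ({u | q u = 0} : Finset G).image (· + s), m t - (∑ x, m x) / 2 =
      E s / 2 := fun s => by rw [sum_image_add_right_eq]; ring
  have hG : (0 : ℝ) < Fintype.card G := by exact_mod_cast Fintype.card_pos
  have hmass : ∑ x, m x ≤ 1 := by
    calc ∑ x, m x ≤ ∑ _x : G, 1 / (Fintype.card G : ℝ) := sum_le_sum fun x _ => hm1 x
      _ = 1 := by simp [hG.ne']
  have hmoment : ∑ s, E s ^ 2 < 4 * δ ^ 3 * Fintype.card G := by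
    refine lt_of_le_of_lt ?_ hq
    calc ∑ s, E s ^ 2 ≤ #{d | autocorr (fun x => signChar (q x)) d ≠ 0} * ∑ x, m x :=
          sum_sq_sum_mul_add_le (fun x => (abs_signChar _).le) hm0 hm1
      _ ≤ #{d | autocorr (fun x => signChar (q x)) d ≠ 0} :=
          mul_le_of_le_one_right (Nat.cast_nonneg _) hmass
  have hfew : (#{s | 2 * δ ≤ |E s|} : ℝ) < δ * Fintype.card G :=
    lt_of_mul_lt_mul_right
      (((card_le_abs_mul_sq_le_sum_sq E (by positivity)).trans_lt hmoment).trans_eq (by ring))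
      (sq_nonneg (2 * δ))
  have hcard : (#{s | |E s| < 2 * δ} : ℝ) + #{s | 2 * δ ≤ |E s|} = Fintype.card G := by
    rw [add_comm]
    simp_rw [← not_le]
    exact_mod_cast card_filter_add_card_filter_not _
  refine ⟨({s | |E s| < 2 * δ} : Finset G), ?_, fun s hs => ?_⟩
  · rw [gt_iff_lt, lt_div_iff₀ hG]
    linarith
  · rw [hshift, abs_div, abs_two]
    linarith [(mem_filter.1 hs).2]

end BalancedShifts

section QuadraticForm

open QuadraticMap

variable {V : Type*} [AddCommGroup V] [Module (ZMod 2) V] [Fintype V]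

lemma autocorr_signChar_quadraticForm_eq_zero (Q : QuadraticForm (ZMod 2) V) {d : V}
    (hd : ∃ s, polar Q s d ≠ 0) : autocorr (fun x => signChar (Q x)) d = 0 := by
  have hsplit : ∀ s, signChar (Q s) * signChar (Q (s + d)) =
      signChar (Q d) * signChar (polar Q s d) := fun s => by
    rw [← AddChar.map_add_eq_mul, ← AddChar.map_add_eq_mul, polar]
    have h2 : (2 : ZMod 2) = 0 := rfl
    congr 1
    linear_combination Q s * h2
  let ψ : AddChar V ℝ := signChar.compAddMonoidHom ((polarBilin Q).flip d).toAddMonoidHom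
  have hψ : ψ ≠ 1 := by
    obtain ⟨s, hs⟩ := hd
    refine AddChar.ne_one_iff.2 ⟨s, ?_⟩
    norm_num [ψ, signChar_apply, hs]
  rw [autocorr, sum_congr rfl fun s _ => hsplit s, ← mul_sum]
  exact mul_eq_zero_of_right _ (AddChar.sum_eq_zero_of_ne_one hψ)

variable {I α : Type*} [Fintype I] [DecidableEq I] [LinearOrder α]

def pairForm (e : I → α) : QuadraticForm (ZMod 2) (I → ZMod 2) :=
  Matrix.toQuadraticForm' (Matrix.of fun i j => if e i < e j then 1 else 0)

lemma polar_pairForm_single {e : I → α} (he : Function.Injective e) (i : I) (d : I → ZMod 2) :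
    polar (pairForm e) (Pi.single i 1) d = ∑ j, d j - d i := by
  rw [pairForm, Matrix.toQuadraticForm', LinearMap.BilinMap.polar_toQuadraticMap,
    Matrix.toLinearMap₂'_apply', Matrix.toLinearMap₂'_apply']
  simp only [Matrix.mulVec, dotProduct, Matrix.of_apply, Pi.single_apply, ite_mul, mul_ite,
    one_mul, zero_mul, mul_one, mul_zero, sum_ite_eq', mem_univ, if_true, ← sum_add_distrib]
  have hterm : ∀ j, ((if e i < e j then d j else 0) + if e j < e i then d j else 0) =
      d j - if j = i then d j else 0 := by
    intro j
    rcases lt_trichotomy (e i) (e j) with h | h | h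
    · simp [h, h.not_gt, he.ne_iff.1 h.ne']
    · simp [he h]
    · simp [h, h.not_gt, he.ne_iff.1 h.ne]
  rw [sum_congr rfl fun j _ => hterm j, sum_sub_distrib, sum_ite_eq']
  simp

lemma eq_zero_or_eq_one_of_forall_polar_pairForm_eq_zero {e : I → α}
    (he : Function.Injective e) {d : I → ZMod 2} (hd : ∀ u, polar (pairForm e) u d = 0) :
    d = 0 ∨ d = 1 := by
  have hconst : ∀ i, d i = ∑ j, d j := fun i =>
    (sub_eq_zero.1 ((polar_pairForm_single he i d).symm.trans (hd _))).symm
  obtain h | h := zmod_two_eq_zero_or_eq_one (∑ j, d j)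
  · exact .inl (funext fun i => (hconst i).trans h)
  · exact .inr (funext fun i => (hconst i).trans h)

lemma card_support_autocorr_signChar_pairForm_le_two {e : I → α} (he : Function.Injective e) :
    #{d | autocorr (fun x => signChar (pairForm e x)) d ≠ 0} ≤ 2 := by
  refine (card_le_card fun d hd => ?_).trans (card_le_two (a := 0) (b := 1))
  have hradical : ∀ u, polar (pairForm e) u d = 0 := by
    by_contra! h
    exact (mem_filter.1 hd).2 (autocorr_signChar_quadraticForm_eq_zero _ h)
  obtain rfl | rfl := eq_zero_or_eq_one_of_forall_polar_pairForm_eq_zero he hradical <;> simp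

end QuadraticForm

theorem stmt5 (ε δ : ℝ) (hδ : 0 < δ) :
    ∃ n : ℕ, ∀ (I : Type) [Fintype I] [DecidableEq I], n < Fintype.card I →
      ∃ a0 a1 : Finset (I → ZMod 2),
        a0 ∪ a1 = Finset.univ ∧ Disjoint a0 a1 ∧
        ∀ m : (I → ZMod 2) → ℝ,
          (∀ x, 0 ≤ m x) → (∀ x, m x ≤ 1 / 2 ^ Fintype.card I) →
          ε ≤ ∑ x, m x →
          ∃ T : Finset (I → ZMod 2), (T.card : ℝ) / 2 ^ Fintype.card I > 1 - δ ∧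
            ∀ s ∈ T,
              |(∑ t ∈ a0.image (· + s), m t) - (∑ x, m x) / 2| < δ := by
  obtain ⟨n, hn⟩ := pow_unbounded_of_one_lt (2 / (4 * δ ^ 3)) one_lt_two
  refine ⟨n, fun I _ _ hI => ?_⟩
  set Q := pairForm (Fintype.equivFin I)
  have hcard : (Fintype.card (I → ZMod 2) : ℝ) = 2 ^ Fintype.card I := by simp
  have hsupport : (#{d | autocorr (fun x => signChar (Q x)) d ≠ 0} : ℝ) <
      4 * δ ^ 3 * Fintype.card (I → ZMod 2) := by
    have h2 : (#{d | autocorr (fun x => signChar (Q x)) d ≠ 0} : ℝ) ≤ 2 := by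
      exact_mod_cast card_support_autocorr_signChar_pairForm_le_two (Fintype.equivFin I).injective
    rw [div_lt_iff₀ (by positivity)] at hn
    rw [hcard]
    nlinarith [pow_lt_pow_right₀ (one_lt_two : (1 : ℝ) < 2) hI, pow_pos hδ 3]
  refine ⟨({x | Q x = 0} : Finset _), ({x | Q x ≠ 0} : Finset _),
    filter_union_filter_not_eq _ _, disjoint_filter_filter_not _ _ _, fun m hm0 hm1 _ => ?_⟩
  rw [← hcard] at hm1 ⊢
  exact exists_large_set_of_balanced_shifts _ hδ hsupport hm0 hm1
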